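/- Let π_1 denote the projection of H_R onto Prim(H_R) = Im(F_1) vanishing on ℚ·1 and on all Im(F_j), j ≥ 2, relative to the decomposition H_R = ℚ·1 ⊕ ⊕_{j≥1} Im(F_j). Then for any non-empty forest F with Δ̃(F) = Σ_{(F)} F^{(1)} ⊗ F^{(2)}, one has π_1(F) = F − Σ_{(F)} F^{(1)} ⊤ π_1(F^{(2)}). -/

import Mathlib

/-!
Both sides of the recursion are linear in `x`, and an `x` with `ε x = 0` lies in
`⨆_{k ≥ 1} Im(F_k)`, because `ε(z ⊤ p) = ε(z) ε(1 ⊤ p)` kills every `Im(F_k)`. On `Im(F_1)`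
both sides equal `x`. For `k ≥ 2` a generator of `Im(F_k)` is `z ⊤ p` with `z ∈ Im(F_{k-1})`
and `p` primitive, so `π₁` kills it, and by the growth formula the right-hand side is
`z ⊤ p - z ⊤ p - Σ z' ⊤ π₁(z'' ⊤ p)`. The key identity is `π₁(y ⊤ p) = ε(y) p` for all `y`
(check it on `1` and on each `Im(F_j)`), which turns the last sum into
`((id ⊗ ε) Δ̃ z) ⊤ p = -ε(z) (1 ⊤ p) = 0`.
-/

open scoped TensorProduct

section

variable {H : Type*} [CommRing H] [Bialgebra ℚ H]

/-- `segAux t q n a = q (a+n) ⊤ ... ⊤ q a`, the iterated natural growth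
(left-nested) for a bilinear operation `t`. -/
def segAux (t : H →ₗ[ℚ] H →ₗ[ℚ] H) (q : ℕ → H) : ℕ → ℕ → H
  | 0, a => q a
  | n + 1, a => t (segAux t q n (a + 1)) (q a)

/-- `seg t q a b = q_b ⊤ ... ⊤ q_a` for `a ≤ b`. -/
def seg (t : H →ₗ[ℚ] H →ₗ[ℚ] H) (q : ℕ → H) (a b : ℕ) : H :=
  segAux t q (b - a) a

/-- The reduced coproduct `Δ̃(x) = Δ(x) − 1 ⊗ x − x ⊗ 1`. -/
noncomputable def rcomul (x : H) : H ⊗[ℚ] H :=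
  Coalgebra.comul x - 1 ⊗ₜ[ℚ] x - x ⊗ₜ[ℚ] 1

/-- `Im t k` is the image `Im(F_k)` of the `k`-fold iterated natural growth of
primitive elements: the span of all `p_k ⊤ ... ⊤ p_1` with the `p_m` primitive. -/
noncomputable def Im (t : H →ₗ[ℚ] H →ₗ[ℚ] H) (k : ℕ) : Submodule ℚ H :=
  Submodule.span ℚ {x : H | ∃ q : ℕ → H,
    (∀ m, 1 ≤ m → m ≤ k →
      (Coalgebra.comul (q m) : H ⊗[ℚ] H) = q m ⊗ₜ[ℚ] 1 + 1 ⊗ₜ[ℚ] q m) ∧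
    x = seg t q 1 k}

namespace NaturalGrowth

open Coalgebra

local notation "ε" => counit (R := ℚ) (A := H)

def IsPrimitive (x : H) : Prop :=
  (comul x : H ⊗[ℚ] H) = x ⊗ₜ[ℚ] 1 + 1 ⊗ₜ[ℚ] x

def IsNaturalGrowth (t : H →ₗ[ℚ] H →ₗ[ℚ] H) : Prop :=
  ∀ x y : H, IsPrimitive y →
    rcomul (t x y) = x ⊗ₜ[ℚ] y + LinearMap.lTensor H (t.flip y) (rcomul x)

lemma segAux_congr (t : H →ₗ[ℚ] H →ₗ[ℚ] H) {q q' : ℕ → H} (n : ℕ) {a : ℕ}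
    (h : ∀ m, a ≤ m → q m = q' m) : segAux t q n a = segAux t q' n a := by
  induction n generalizing a with
  | zero => exact h a le_rfl
  | succ n ih =>
    rw [segAux, segAux, ih fun m hm => h m (by omega), h a le_rfl]

lemma segAux_shift (t : H →ₗ[ℚ] H →ₗ[ℚ] H) (q : ℕ → H) (b : ℕ) :
    ∀ n a, segAux t (fun m => q (m + b)) n a = segAux t q n (a + b)
  | 0, _ => rfl
  | n + 1, a => by
    rw [segAux, segAux, segAux_shift t q b n (a + 1), Nat.add_right_comm]

lemma seg_one_succ (t : H →ₗ[ℚ] H →ₗ[ℚ] H) (q : ℕ → H) {k : ℕ} (hk : 1 ≤ k) :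
    seg t q 1 (k + 1) = t (seg t (fun m => q (m + 1)) 1 k) (q 1) := by
  obtain ⟨j, rfl⟩ : ∃ j, k = j + 1 := ⟨k - 1, by omega⟩
  simp only [seg, Nat.add_sub_cancel, segAux_shift]
  rfl

lemma seg_self (t : H →ₗ[ℚ] H →ₗ[ℚ] H) (q : ℕ → H) (a : ℕ) : seg t q a a = q a := by
  rw [seg, Nat.sub_self, segAux]

lemma rcomul_eq_zero_of_isPrimitive {p : H} (hp : IsPrimitive p) : rcomul p = 0 := by
  rw [rcomul, hp]
  abel

lemma rcomul_one : rcomul (1 : H) = -(1 ⊗ₜ[ℚ] (1 : H)) := by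
  rw [rcomul, Bialgebra.comul_one, Algebra.TensorProduct.one_def]
  abel

lemma rTensor_counit_rcomul (x : H) :
    LinearMap.rTensor H ε (rcomul x) = -(ε x ⊗ₜ[ℚ] (1 : H)) := by
  simp only [rcomul, map_sub, rTensor_counit_comul, LinearMap.rTensor_tmul,
    Bialgebra.counit_one]
  abel

lemma lTensor_counit_rcomul (x : H) :
    LinearMap.lTensor H ε (rcomul x) = -((1 : H) ⊗ₜ[ℚ] ε x) := by
  simp only [rcomul, map_sub, lTensor_counit_comul, LinearMap.lTensor_tmul,
    Bialgebra.counit_one]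
  abel

lemma counit_eq_zero_of_isPrimitive {p : H} (hp : IsPrimitive p) :
    ε p = 0 := by
  have h := congrArg (fun u => TensorProduct.lid ℚ ℚ (LinearMap.lTensor ℚ ε u))
    (rTensor_counit_rcomul p)
  simpa [rcomul_eq_zero_of_isPrimitive hp, eq_comm] using h

variable {t : H →ₗ[ℚ] H →ₗ[ℚ] H}

lemma counit_growth (hg : IsNaturalGrowth t) (x : H) {p : H} (hp : IsPrimitive p) :
    ε (t x p) = ε x * ε (t 1 p) := by
  have h := congrArg (fun u => TensorProduct.lid ℚ ℚ
    (LinearMap.lTensor ℚ ε (LinearMap.rTensor H ε u))) (hg x p hp)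
  have hcomm : LinearMap.rTensor H ε ((t.flip p).lTensor H (rcomul x))
      = (t.flip p).lTensor ℚ (LinearMap.rTensor H ε (rcomul x)) := by
    rw [← LinearMap.comp_apply, ← LinearMap.comp_apply,
      LinearMap.rTensor_comp_lTensor, LinearMap.lTensor_comp_rTensor]
  simpa only [map_add, rTensor_counit_rcomul, hcomm, LinearMap.rTensor_tmul,
    LinearMap.lTensor_tmul, counit_eq_zero_of_isPrimitive hp, TensorProduct.tmul_zero,
    LinearMap.flip_apply, TensorProduct.lid_tmul, map_neg, Bialgebra.counit_one,
    smul_eq_mul, mul_one, zero_add, neg_inj] using h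

lemma growth_one_eq (hg : IsNaturalGrowth t) {p : H} (hp : IsPrimitive p) :
    t 1 p = p + ε (t 1 p) • (1 : H) := by
  have h := hg 1 p hp
  rw [rcomul_one, map_neg, LinearMap.lTensor_tmul, LinearMap.flip_apply, rcomul] at h
  have hcomul : (comul (t 1 p) : H ⊗[ℚ] H) = t 1 p ⊗ₜ[ℚ] (1 : H) + (1 : H) ⊗ₜ[ℚ] p := by
    linear_combination h
  have hcounit := congrArg (fun u => TensorProduct.lid ℚ H (LinearMap.rTensor H ε u)) hcomul
  simpa [add_comm] using hcounit

lemma Im_le_iff {k : ℕ} {N : Submodule ℚ H} :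
    Im t k ≤ N ↔
      ∀ q : ℕ → H, (∀ m, 1 ≤ m → m ≤ k → IsPrimitive (q m)) → seg t q 1 k ∈ N := by
  rw [Im, Submodule.span_le]
  exact ⟨fun h q hq => h ⟨q, hq, rfl⟩, by rintro h _ ⟨q, hq, rfl⟩; exact h q hq⟩

lemma seg_mem_Im {k : ℕ} {q : ℕ → H} (hq : ∀ m, 1 ≤ m → m ≤ k → IsPrimitive (q m)) :
    seg t q 1 k ∈ Im t k :=
  Im_le_iff.1 le_rfl q hq

lemma growth_mem_Im_succ {k : ℕ} (hk : 1 ≤ k) {z p : H} (hz : z ∈ Im t k)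
    (hp : IsPrimitive p) : t z p ∈ Im t (k + 1) := by
  suffices Im t k ≤ (Im t (k + 1)).comap (t.flip p) from this hz
  refine Im_le_iff.2 fun q hq => ?_
  let q' : ℕ → H := fun m => if m = 1 then p else q (m - 1)
  have hq' : ∀ m, 1 ≤ m → m ≤ k + 1 → IsPrimitive (q' m) := by
    intro m hm1 hmk
    by_cases hm : m = 1
    · simpa [q', hm] using hp
    · simpa [q', hm] using hq (m - 1) (by omega) (by omega)
  have hseg : seg t (fun m => q' (m + 1)) 1 k = seg t q 1 k :=
    segAux_congr t _ fun m hm => by simp [q', show m ≠ 0 by omega]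
  have := seg_mem_Im (t := t) hq'
  rwa [seg_one_succ t q' hk, hseg] at this

lemma Im_succ_le {k : ℕ} (hk : 1 ≤ k) {N : Submodule ℚ H}
    (h : ∀ z ∈ Im t k, ∀ p, IsPrimitive p → t z p ∈ N) : Im t (k + 1) ≤ N := by
  refine Im_le_iff.2 fun q hq => ?_
  rw [seg_one_succ t q hk]
  exact h _ (seg_mem_Im fun m hm1 hmk => hq (m + 1) (by omega) (by omega)) _
    (hq 1 le_rfl (by omega))

lemma Im_le_ker_counit (hg : IsNaturalGrowth t) {k : ℕ} (hk : 1 ≤ k) :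
    Im t k ≤ LinearMap.ker ε := by
  induction k, hk using Nat.le_induction with
  | base =>
    refine Im_le_iff.2 fun q hq => ?_
    rw [seg_self]
    exact counit_eq_zero_of_isPrimitive (hq 1 le_rfl le_rfl)
  | succ k hk ih =>
    refine Im_succ_le hk fun z hz p hp => ?_
    rw [LinearMap.mem_ker, counit_growth hg z hp, LinearMap.mem_ker.1 (ih hz), zero_mul]

lemma mem_iSup_Im_of_counit_eq_zero (hg : IsNaturalGrowth t)
    {x : H} (hcover : x ∈ Submodule.span ℚ {(1 : H)} ⊔ ⨆ k, ⨆ _ : 1 ≤ k, Im t k)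
    (hx : ε x = 0) : x ∈ ⨆ k, ⨆ _ : 1 ≤ k, Im t k := by
  obtain ⟨u, hu, v, hv, rfl⟩ := Submodule.mem_sup.1 hcover
  obtain ⟨c, rfl⟩ := Submodule.mem_span_singleton.1 hu
  have hker : (⨆ k, ⨆ _ : 1 ≤ k, Im t k) ≤ LinearMap.ker ε :=
    iSup₂_le fun k hk => Im_le_ker_counit hg hk
  have hv0 : ε v = 0 := hker hv
  rw [map_add, map_smul, Bialgebra.counit_one, hv0, smul_eq_mul, mul_one, add_zero] at hx
  rwa [hx, zero_smul, zero_add]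

variable {π : H →ₗ[ℚ] H}

lemma pi_growth (hg : IsNaturalGrowth t)
    (hcover : ∀ x : H, x ∈ Submodule.span ℚ {(1 : H)} ⊔ ⨆ k, ⨆ _ : 1 ≤ k, Im t k)
    (hπone : π 1 = 0) (hπhigher : ∀ k, 2 ≤ k → ∀ x ∈ Im t k, π x = 0)
    {p : H} (hp : IsPrimitive p) (hπp : π p = p) (z : H) :
    π (t z p) = ε z • p := by
  suffices Submodule.span ℚ {(1 : H)} ⊔ ⨆ k, ⨆ _ : 1 ≤ k, Im t k ≤
      LinearMap.eqLocus (π ∘ₗ t.flip p) (LinearMap.smulRight ε p) from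
    this (hcover z)
  refine sup_le ((Submodule.span_singleton_le_iff_mem _ _).2 ?_) (iSup₂_le fun k hk => ?_)
  · change π (t 1 p) = ε (1 : H) • p
    rw [growth_one_eq hg hp, map_add, map_smul, hπone, hπp, smul_zero, add_zero,
      Bialgebra.counit_one, one_smul]
  · intro z hz
    change π (t z p) = ε z • p
    rw [hπhigher (k + 1) (by omega) _ (growth_mem_Im_succ hk hz hp),
      LinearMap.mem_ker.1 (Im_le_ker_counit hg hk hz), zero_smul]

lemma lift_lTensor_rcomul_growth (hg : IsNaturalGrowth t) {p : H} (hp : IsPrimitive p)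
    (hπp : π p = p) (hπgrowth : ∀ z, π (t z p) = ε z • p)
    {z : H} (hz : ε z = 0) :
    TensorProduct.lift t (π.lTensor H (rcomul (t z p))) = t z p := by
  have hcomp : π ∘ₗ t.flip p = LinearMap.toSpanSingleton ℚ H p ∘ₗ ε := by
    ext z
    exact hπgrowth z
  rw [hg z p hp, map_add, LinearMap.lTensor_tmul, hπp, ← LinearMap.comp_apply (π.lTensor H),
    ← LinearMap.lTensor_comp, hcomp, LinearMap.lTensor_comp, LinearMap.comp_apply,
    lTensor_counit_rcomul, hz]
  simp

noncomputable def rcomulₗ : H →ₗ[ℚ] H ⊗[ℚ] H :=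
  comul - TensorProduct.mk ℚ H H 1 - (TensorProduct.mk ℚ H H).flip 1

noncomputable def recursionMap (t : H →ₗ[ℚ] H →ₗ[ℚ] H) (π : H →ₗ[ℚ] H) : H →ₗ[ℚ] H :=
  LinearMap.id - TensorProduct.lift t ∘ₗ π.lTensor H ∘ₗ rcomulₗ

lemma recursionMap_apply (x : H) :
    recursionMap t π x = x - TensorProduct.lift t (π.lTensor H (rcomul x)) := rfl

lemma Im_le_eqLocus_recursionMap (hg : IsNaturalGrowth t)
    (hcover : ∀ x : H, x ∈ Submodule.span ℚ {(1 : H)} ⊔ ⨆ k, ⨆ _ : 1 ≤ k, Im t k)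
    (hπprim : ∀ x : H, IsPrimitive x → π x = x) (hπone : π 1 = 0)
    (hπhigher : ∀ k, 2 ≤ k → ∀ x ∈ Im t k, π x = 0) {k : ℕ} (hk : 1 ≤ k) :
    Im t k ≤ LinearMap.eqLocus π (recursionMap t π) := by
  obtain rfl | hk := hk.eq_or_lt
  · refine Im_le_iff.2 fun q hq => ?_
    have hp := hq 1 le_rfl le_rfl
    rw [seg_self, LinearMap.mem_eqLocus, recursionMap_apply, rcomul_eq_zero_of_isPrimitive hp,
      map_zero, map_zero, sub_zero]
    exact hπprim _ hp
  obtain ⟨j, hj, rfl⟩ : ∃ j, 1 ≤ j ∧ k = j + 1 := ⟨k - 1, by omega, by omega⟩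
  refine Im_succ_le hj fun z hz p hp => ?_
  rw [LinearMap.mem_eqLocus, recursionMap_apply, hπhigher (j + 1) (by omega) _
    (growth_mem_Im_succ hj hz hp), lift_lTensor_rcomul_growth hg hp (hπprim p hp)
    (pi_growth hg hcover hπone hπhigher hp (hπprim p hp)) (Im_le_ker_counit hg hj hz), sub_self]

end NaturalGrowth

/-- Let `π₁` be the projection of `H_R` onto `Prim(H_R) = Im(F_1)` vanishing on `ℚ·1`
and on all `Im(F_j)`, `j ≥ 2`, relative to the decomposition
`H_R = ℚ·1 ⊕ ⊕_{j≥1} Im(F_j)`.  Then for any non-empty forest `F` (equivalently, by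
linearity, any `x` in the augmentation ideal) one has
`π₁(F) = F − Σ_{(F)} F⁽¹⁾ ⊤ π₁(F⁽²⁾)`, the sum being over the reduced coproduct. -/
theorem pi_one_recursion
    (t : H →ₗ[ℚ] H →ₗ[ℚ] H)
    -- the natural growth property for `y` primitive
    (hgrowth : ∀ x y : H,
      (Coalgebra.comul y : H ⊗[ℚ] H) = y ⊗ₜ[ℚ] 1 + 1 ⊗ₜ[ℚ] y →
      rcomul (t x y) = x ⊗ₜ[ℚ] y + LinearMap.lTensor H (t.flip y) (rcomul x))
    -- the decomposition `H = ℚ·1 ⊕ ⊕_{j ≥ 1} Im(F_j)` (covering part)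
    (hcover : ∀ x : H,
      x ∈ Submodule.span ℚ {(1 : H)} ⊔ ⨆ k, ⨆ _ : 1 ≤ k, Im t k)
    -- `π` is the projection onto `Im(F_1) = Prim(H_R)` along this decomposition
    (π : H →ₗ[ℚ] H)
    (hπprim : ∀ x : H,
      (Coalgebra.comul x : H ⊗[ℚ] H) = x ⊗ₜ[ℚ] 1 + 1 ⊗ₜ[ℚ] x → π x = x)
    (hπone : π 1 = 0)
    (hπhigher : ∀ k, 2 ≤ k → ∀ x ∈ Im t k, π x = 0) :
    ∀ x : H, Coalgebra.counit (R := ℚ) x = 0 →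
      π x = x - TensorProduct.lift t ((LinearMap.lTensor H π) (rcomul x)) := by
  intro x hx
  have hIm : (⨆ k, ⨆ _ : 1 ≤ k, Im t k) ≤
      LinearMap.eqLocus π (NaturalGrowth.recursionMap t π) := iSup₂_le fun k hk =>
    NaturalGrowth.Im_le_eqLocus_recursionMap hgrowth hcover hπprim hπone hπhigher hk
  exact hIm (NaturalGrowth.mem_iSup_Im_of_counit_eq_zero hgrowth (hcover x) hx)

end
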